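/- For the product metric dr² + dt² + δ²ds²_n on D² × S^n (flat two-dimensional factor times a round sphere of radius δ), with n ≥ 2 and 0 ≤ p ≤ n-2, every p-plane P in the tangent space satisfies s_{p,n+2}(P) ≥ (n-p)(n-p-1)/δ² > 0. -/

import Mathlib

open Module

/-- Sectional curvature of the product metric `dr² + dt² + δ² ds²_n` on `D² × S^n`,
in an orthonormal frame with indices `0, 1` tangent to the flat `D²` factor and
indices `i ≥ 2` (normalized) directions tangent to the round sphere of radius `δ`:
only planes tangent to the sphere factor contribute, with curvature `1/δ²`. -/
noncomputable def flatSphereK (n : ℕ) (δ : ℝ)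
    (v w : EuclideanSpace ℝ (Fin (n + 2))) : ℝ :=
  (1 / δ ^ 2) *
    (∑ i : Fin (n + 2), ∑ j : Fin (n + 2),
      if 1 < i ∧ i < j then (v i * w j - v j * w i) ^ 2 else 0)

/-- `∑_{i ≠ j} K (e i) (e j)`: the `(p,n+2)`-intermediate scalar curvature when `e`
is an orthonormal basis of the orthogonal complement of a `p`-plane. -/
noncomputable def sSum {m k : ℕ}
    (K : EuclideanSpace ℝ (Fin m) → EuclideanSpace ℝ (Fin m) → ℝ)
    (e : Fin k → EuclideanSpace ℝ (Fin m)) : ℝ :=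
  ∑ i : Fin k, ∑ j : Fin k, if i ≠ j then K (e i) (e j) else 0

/-! Write `g_S(v, w) = ∑_{i ≥ 2} vᵢ wᵢ` for the sphere part of the metric. By Lagrange's identity
`K(v, w) = (g_S(v, v) g_S(w, w) - g_S(v, w)²) / δ²`, so for an orthonormal frame `e_1, …, e_k`
the sum `s = ∑_{a ≠ b} K(e_a, e_b)` is `((tr G)² - ∑ G_ab²) / δ²` for the Gram matrix
`G = I - (x xᵀ + y yᵀ)` of the sphere components, `x` and `y` being the two flat coordinates of
the frame. With `A = |x|²`, `B = |y|²`, `C = ⟨x, y⟩` this gives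
`δ² s = (k - A - B)² - k + 2(A + B) - A² - 2C² - B²`. Bessel's inequality gives `A, B ≤ 1`, and
Cauchy–Schwarz for the parts of the coordinate vectors `ε₀, ε₁` orthogonal to the frame gives
`C² ≤ (1 - A)(1 - B)`; together they yield `δ² s ≥ (k - 2)(k - 3) + 2(k - 2)(2 - A - B)`. -/

open Finset
open scoped RealInnerProductSpace

lemma sum_sum_sq_mul_sub_mul_sq {ι : Type*} (s : Finset ι) (v w : ι → ℝ) :
    ∑ i ∈ s, ∑ j ∈ s, (v i * w j - v j * w i) ^ 2
      = 2 * ((∑ i ∈ s, v i ^ 2) * (∑ i ∈ s, w i ^ 2) - (∑ i ∈ s, v i * w i) ^ 2) := by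
  have h : ∀ i j, (v i * w j - v j * w i) ^ 2
      = v i ^ 2 * w j ^ 2 + w i ^ 2 * v j ^ 2 - 2 * (v i * w i) * (v j * w j) := by
    intros; ring
  simp only [h, sum_add_distrib, sum_sub_distrib, ← mul_sum, ← sum_mul]
  ring

lemma sum_sum_ite_lt_sq_mul_sub_mul_sq {ι : Type*} [LinearOrder ι] (s : Finset ι) (v w : ι → ℝ) :
    ∑ i ∈ s, ∑ j ∈ s, (if i < j then (v i * w j - v j * w i) ^ 2 else 0)
      = (∑ i ∈ s, v i ^ 2) * (∑ i ∈ s, w i ^ 2) - (∑ i ∈ s, v i * w i) ^ 2 := by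
  set f : ι → ι → ℝ := fun i j => (v i * w j - v j * w i) ^ 2
  have hsplit : ∀ i j, f i j = (if i < j then f i j else 0) + (if j < i then f j i else 0) := by
    intro i j
    rcases lt_trichotomy i j with h | rfl | h
    · simp [h, h.not_gt]
    · simp [f]
    · simp only [h, h.not_gt, if_true, if_false, zero_add, f]; ring
  have hfull := sum_sum_sq_mul_sub_mul_sq s v w
  rw [sum_congr rfl fun i _ => sum_congr rfl fun j _ => hsplit i j] at hfull
  simp only [sum_add_distrib] at hfull
  rw [sum_comm (f := fun i j => if j < i then f j i else 0)] at hfull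
  linarith

lemma sum_sum_ite_ne_mul_sub_sq {ι : Type*} [Fintype ι] [DecidableEq ι] (G : ι → ι → ℝ) :
    ∑ a, ∑ b, (if a ≠ b then G a a * G b b - G a b ^ 2 else 0)
      = (∑ a, G a a) ^ 2 - ∑ a, ∑ b, G a b ^ 2 := by
  have h : ∀ a b,
      (if a ≠ b then G a a * G b b - G a b ^ 2 else 0) = G a a * G b b - G a b ^ 2 := by
    intro a b
    split_ifs with hab
    · rfl
    · rw [not_not.mp hab]; ring
  simp only [h, sum_sub_distrib]
  rw [sq, sum_mul_sum]

lemma sq_sum_diag_sub_sum_sum_sq_eq {ι : Type*} [Fintype ι] [DecidableEq ι] {G : ι → ι → ℝ}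
    (x y : ι → ℝ) (hG : ∀ a b, G a b = (if a = b then 1 else 0) - (x a * x b + y a * y b)) :
    (∑ a, G a a) ^ 2 - ∑ a, ∑ b, G a b ^ 2
      = (Fintype.card ι - (∑ a, x a ^ 2 + ∑ a, y a ^ 2)) ^ 2
        - (Fintype.card ι - 2 * (∑ a, x a ^ 2 + ∑ a, y a ^ 2) + (∑ a, x a ^ 2) ^ 2
          + 2 * (∑ a, x a * y a) ^ 2 + (∑ a, y a ^ 2) ^ 2) := by
  have hdiag : ∀ a, G a a = 1 - (x a ^ 2 + y a ^ 2) := fun a => by rw [hG, if_pos rfl]; ring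
  have hsq : ∀ a b, G a b ^ 2 = (if a = b then 1 - 2 * (x a ^ 2 + y a ^ 2) else 0)
      + (x a ^ 2 * x b ^ 2 + 2 * (x a * y a) * (x b * y b) + y a ^ 2 * y b ^ 2) := by
    intro a b
    rw [hG]
    split_ifs with hab
    · subst hab; ring
    · ring
  simp only [hsq, hdiag, sum_add_distrib, sum_ite_eq, mem_univ, if_true, sum_sub_distrib,
    ← mul_sum, ← sum_mul, sum_const, card_univ, nsmul_eq_mul]
  ring

lemma sub_two_mul_sub_three_le {k A B C : ℝ} (hk : 2 ≤ k) (hA : A ≤ 1) (hB : B ≤ 1)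
    (hC : C ^ 2 ≤ (1 - A) * (1 - B)) :
    (k - 2) * (k - 3) ≤ (k - (A + B)) ^ 2 - (k - 2 * (A + B) + A ^ 2 + 2 * C ^ 2 + B ^ 2) := by
  nlinarith [mul_nonneg (sub_nonneg.mpr hk) (by linarith : (0 : ℝ) ≤ 2 - (A + B))]

section Frame

variable {ι E : Type*} [Fintype ι] [NormedAddCommGroup E] [InnerProductSpace ℝ E] {e : ι → E}

lemma Orthonormal.inner_sub_sum_smul (he : Orthonormal ℝ e) (x y : E) :
    ⟪x - ∑ a, ⟪e a, x⟫ • e a, y - ∑ a, ⟪e a, y⟫ • e a⟫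
      = ⟪x, y⟫ - ∑ a, ⟪e a, x⟫ * ⟪e a, y⟫ := by
  have hx : ∀ a, ⟪x, e a⟫ = ⟪e a, x⟫ := fun a => real_inner_comm _ _
  rw [inner_sub_left, inner_sub_right, inner_sub_right, he.inner_sum]
  simp only [inner_sum, sum_inner, real_inner_smul_left, real_inner_smul_right, hx, conj_trivial,
    mul_comm ⟪e _, y⟫]
  ring

lemma Orthonormal.sq_inner_sub_sum_le (he : Orthonormal ℝ e) (x y : E) :
    (⟪x, y⟫ - ∑ a, ⟪e a, x⟫ * ⟪e a, y⟫) ^ 2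
      ≤ (‖x‖ ^ 2 - ∑ a, ⟪e a, x⟫ ^ 2) * (‖y‖ ^ 2 - ∑ a, ⟪e a, y⟫ ^ 2) := by
  have hdefect : ∀ z : E, ‖z‖ ^ 2 - ∑ a, ⟪e a, z⟫ ^ 2
      = ⟪z - ∑ a, ⟪e a, z⟫ • e a, z - ∑ a, ⟪e a, z⟫ • e a⟫ := fun z => by
    rw [he.inner_sub_sum_smul, real_inner_self_eq_norm_sq]
    simp only [sq]
  rw [← he.inner_sub_sum_smul, hdefect, hdefect, sq]
  exact real_inner_mul_inner_self_le _ _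

end Frame

section Coordinates

variable {κ ι : Type*} [Fintype κ] [DecidableEq κ] [Fintype ι]
  {e : ι → EuclideanSpace ℝ κ}

lemma Orthonormal.sum_sq_apply_le_one (he : Orthonormal ℝ e) (i : κ) :
    ∑ a, e a i ^ 2 ≤ 1 := by
  simpa [EuclideanSpace.inner_single_right] using
    he.sum_inner_products_le (s := univ) (EuclideanSpace.single i (1 : ℝ))

lemma Orthonormal.sq_sum_mul_apply_le (he : Orthonormal ℝ e) {i j : κ} (hij : i ≠ j) :
    (∑ a, e a i * e a j) ^ 2 ≤ (1 - ∑ a, e a i ^ 2) * (1 - ∑ a, e a j ^ 2) := by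
  simpa [EuclideanSpace.inner_single_right, hij] using
    he.sq_inner_sub_sum_le (EuclideanSpace.single i (1 : ℝ)) (EuclideanSpace.single j 1)

end Coordinates

def sphereInner (n : ℕ) (v w : EuclideanSpace ℝ (Fin (n + 2))) : ℝ :=
  ∑ i : Fin (n + 2) with 1 < i, v i * w i

lemma flatSphereK_eq_sphereInner (n : ℕ) (δ : ℝ) (v w : EuclideanSpace ℝ (Fin (n + 2))) :
    flatSphereK n δ v w
      = (sphereInner n v v * sphereInner n w w - sphereInner n v w ^ 2) / δ ^ 2 := by
  have hT : ∀ f : Fin (n + 2) → Fin (n + 2) → ℝ,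
      ∑ i, ∑ j, (if 1 < i ∧ i < j then f i j else 0)
        = ∑ i with 1 < i, ∑ j with 1 < j, if i < j then f i j else 0 := by
    intro f
    rw [sum_filter]
    refine sum_congr rfl fun i _ => ?_
    rw [sum_filter]
    split_ifs with hi
    · refine sum_congr rfl fun j _ => ?_
      by_cases hij : i < j
      · simp [hi, hij, hi.trans hij]
      · simp [hij]
    · simp [hi]
  rw [flatSphereK, hT, sum_sum_ite_lt_sq_mul_sub_mul_sq, one_div_mul_eq_div]
  simp only [sphereInner, sq]

lemma sphereInner_eq_inner_sub (n : ℕ) (v w : EuclideanSpace ℝ (Fin (n + 2))) :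
    sphereInner n v w = ⟪v, w⟫ - (v 0 * w 0 + v 1 * w 1) := by
  have hlt : ∀ i : Fin n, (1 : Fin (n + 2)) < i.succ.succ := fun i => by
    simp [Fin.lt_def]
  rw [real_inner_comm]
  simp [sphereInner, PiLp.inner_apply, sum_filter, Fin.sum_univ_succ, hlt]

lemma Orthonormal.sphereInner_eq {n : ℕ} {ι : Type*} [DecidableEq ι]
    {e : ι → EuclideanSpace ℝ (Fin (n + 2))} (he : Orthonormal ℝ e) (a b : ι) :
    sphereInner n (e a) (e b) = (if a = b then 1 else 0) - (e a 0 * e b 0 + e a 1 * e b 1) := by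
  rw [sphereInner_eq_inner_sub, orthonormal_iff_ite.mp he]

lemma sSum_flatSphereK_eq_sphereInner {n k : ℕ} (δ : ℝ)
    (e : Fin k → EuclideanSpace ℝ (Fin (n + 2))) :
    sSum (flatSphereK n δ) e
      = ((∑ a, sphereInner n (e a) (e a)) ^ 2 - ∑ a, ∑ b, sphereInner n (e a) (e b) ^ 2)
        / δ ^ 2 := by
  rw [← sum_sum_ite_ne_mul_sub_sq fun a b => sphereInner n (e a) (e b)]
  simp only [sSum, flatSphereK_eq_sphereInner, sum_div, ite_div, zero_div]

theorem le_sSum_flatSphereK {n k : ℕ} (hk : 2 ≤ k) (δ : ℝ)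
    {e : Fin k → EuclideanSpace ℝ (Fin (n + 2))} (he : Orthonormal ℝ e) :
    ((k : ℝ) - 2) * ((k : ℝ) - 3) / δ ^ 2 ≤ sSum (flatSphereK n δ) e := by
  have hA := he.sum_sq_apply_le_one 0
  have hB := he.sum_sq_apply_le_one 1
  have hC := he.sq_sum_mul_apply_le (i := 0) (j := 1) zero_ne_one
  rw [sSum_flatSphereK_eq_sphereInner,
    sq_sum_diag_sub_sum_sum_sq_eq (fun a => e a 0) (fun a => e a 1) he.sphereInner_eq,
    Fintype.card_fin]
  gcongr
  exact sub_two_mul_sub_three_le (by exact_mod_cast hk) hA hB hC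

/-- For the product metric `dr² + dt² + δ² ds²_n` on `D² × S^n` with `n ≥ 2` and
`0 ≤ p ≤ n-2`, every `p`-plane `P` in the tangent space satisfies
`s_{p,n+2}(P) ≥ (n-p)(n-p-1)/δ² > 0`. -/
theorem flat_times_sphere_curvature_bound (n p : ℕ) (hn : 2 ≤ n) (hp : p ≤ n - 2)
    (δ : ℝ) (hδ : 0 < δ) :
    ∀ P : Submodule ℝ (EuclideanSpace ℝ (Fin (n + 2))), finrank ℝ P = p →
      ∀ e : Fin (n + 2 - p) → EuclideanSpace ℝ (Fin (n + 2)),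
        Orthonormal ℝ e → (∀ i, e i ∈ Pᗮ) →
          ((n - p : ℕ) : ℝ) * ((n - p - 1 : ℕ) : ℝ) / δ ^ 2 ≤
              sSum (flatSphereK n δ) e ∧
            0 < sSum (flatSphereK n δ) e := by
  intro P _ e he _
  have hbound := le_sSum_flatSphereK (by omega) δ he
  have hcast₂ : ((n + 2 - p : ℕ) : ℝ) - 2 = (n - p : ℕ) := by
    rw [show n + 2 - p = n - p + 2 by omega]; push_cast; ring
  have hcast₃ : ((n + 2 - p : ℕ) : ℝ) - 3 = (n - p - 1 : ℕ) := by
    rw [show n + 2 - p = n - p - 1 + 3 by omega]; push_cast; ring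
  rw [hcast₂, hcast₃] at hbound
  refine ⟨hbound, lt_of_lt_of_le ?_ hbound⟩
  have hq₀ : (0 : ℝ) < (n - p : ℕ) := by exact_mod_cast (by omega : 0 < n - p)
  have hq₁ : (0 : ℝ) < (n - p - 1 : ℕ) := by exact_mod_cast (by omega : 0 < n - p - 1)
  exact div_pos (mul_pos hq₀ hq₁) (by positivity)
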